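/- Determinant reduction for the counterexample ansatz: let b ∈ ℝ and let φ : ℝ → ℝ be twice differentiable. Define u : ℝ² → ℝ by u(x₁, x₂) = (b/2)x₂² + φ(x₁), and define the symmetric matrix field A(x₁,x₂) = diag(−b²x₂², −b − b²x₂²). Then for every (x₁, x₂) ∈ ℝ², det(D²u(x₁,x₂) + |∇u(x₁,x₂)|²·I + A(x₁,x₂)) = (φ''(x₁) + φ'(x₁)²)·φ'(x₁)², where D²u is the Hessian matrix of u, ∇u its gradient, and I the 2×2 identity matrix. -/

import Mathlib

/-!
The ansatz is a separable sum `u(y) = φ(y₁) + (b/2) y₂²`, so its Hessian is `diag(φ''(x₁), b)` and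
`|∇u|² = φ'(x₁)² + b² x₂²`. Adding `|∇u|² I` and `A` therefore gives the diagonal matrix
`diag(φ'' + φ'², φ'²)`: the `b² x₂²` terms cancel in both entries and `b` cancels in the second.
-/

open Finset

/-- The `i`-th partial derivative `∂_i u (x)`. -/
noncomputable def egrad (n : ℕ) (u : (Fin n → ℝ) → ℝ) (x : Fin n → ℝ) (i : Fin n) : ℝ :=
  fderiv ℝ u x (Pi.single i 1)

/-- The squared Euclidean length `|∇u(x)|²` of the gradient. -/
noncomputable def gradSq (n : ℕ) (u : (Fin n → ℝ) → ℝ) (x : Fin n → ℝ) : ℝ :=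
  ∑ i : Fin n, (egrad n u x i) ^ 2

/-- The Hessian entry `∂_i∂_j u(x)`. -/
noncomputable def ehess (n : ℕ) (u : (Fin n → ℝ) → ℝ) (x : Fin n → ℝ) (i j : Fin n) : ℝ :=
  fderiv ℝ (fun y => fderiv ℝ u y (Pi.single j 1)) x (Pi.single i 1)

/-- The ansatz `u(x₁,x₂) = (b/2) x₂² + φ(x₁)`. -/
noncomputable def uAnsatz (b : ℝ) (φ : ℝ → ℝ) (x : Fin 2 → ℝ) : ℝ :=
  b / 2 * (x 1) ^ 2 + φ (x 0)

/-- The matrix `A(x₁,x₂) = diag(-b²x₂², -b - b²x₂²)`. -/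
noncomputable def Amat (b : ℝ) (x : Fin 2 → ℝ) : Matrix (Fin 2) (Fin 2) ℝ :=
  !![-(b ^ 2) * (x 1) ^ 2, 0; 0, -b - b ^ 2 * (x 1) ^ 2]

section SeparableSum

variable {ι : Type*} [Fintype ι] [DecidableEq ι]

theorem fderiv_comp_apply_single {g : ℝ → ℝ} {x : ι → ℝ} {j : ι}
    (hg : DifferentiableAt ℝ g (x j)) (i : ι) :
    fderiv ℝ (fun y : ι → ℝ => g (y j)) x (Pi.single i 1)
      = if i = j then deriv g (x j) else 0 := by
  have h : HasFDerivAt (fun y : ι → ℝ => g (y j))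
      (deriv g (x j) • ContinuousLinearMap.proj (R := ℝ) j) x :=
    hg.hasDerivAt.comp_hasFDerivAt x (hasFDerivAt_apply j x)
  simp [h.fderiv, Pi.single_apply, eq_comm]

theorem fderiv_sum_comp_apply_single {f : ι → ℝ → ℝ} {x : ι → ℝ}
    (hf : ∀ i, DifferentiableAt ℝ (f i) (x i)) (j : ι) :
    fderiv ℝ (fun y : ι → ℝ => ∑ i, f i (y i)) x (Pi.single j 1) = deriv (f j) (x j) := by
  have h : HasFDerivAt (fun y : ι → ℝ => ∑ i, f i (y i))
      (∑ i, deriv (f i) (x i) • ContinuousLinearMap.proj (R := ℝ) i) x :=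
    HasFDerivAt.fun_sum fun i _ => (hf i).hasDerivAt.comp_hasFDerivAt x (hasFDerivAt_apply i x)
  simp [h.fderiv, Pi.single_apply]

end SeparableSum

section SeparableHessian

variable {n : ℕ} {f : Fin n → ℝ → ℝ} {x : Fin n → ℝ}

theorem egrad_sum_comp_apply (hf : ∀ i, DifferentiableAt ℝ (f i) (x i)) (j : Fin n) :
    egrad n (fun y => ∑ i, f i (y i)) x j = deriv (f j) (x j) :=
  fderiv_sum_comp_apply_single hf j

theorem ehess_sum_comp_apply (hf : ∀ i, Differentiable ℝ (f i))
    (hf' : ∀ i, DifferentiableAt ℝ (deriv (f i)) (x i)) (i j : Fin n) :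
    ehess n (fun y => ∑ i, f i (y i)) x i j = if i = j then deriv (deriv (f j)) (x j) else 0 := by
  have hgrad : (fun y => fderiv ℝ (fun y => ∑ i, f i (y i)) y (Pi.single j 1))
      = fun y => deriv (f j) (y j) :=
    funext fun y => fderiv_sum_comp_apply_single (fun i => hf i (y i)) j
  rw [ehess, hgrad, fderiv_comp_apply_single (hf' j)]

end SeparableHessian

theorem uAnsatz_eq_sum (b : ℝ) (φ : ℝ → ℝ) :
    uAnsatz b φ = fun y => ∑ i, ![φ, fun t => b / 2 * t ^ 2] i (y i) := by
  funext y
  simp [uAnsatz, add_comm]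

/-- Determinant reduction for the counterexample ansatz: for
`u(x₁,x₂) = (b/2)x₂² + φ(x₁)` and `A = diag(-b²x₂², -b - b²x₂²)`,
`det(D²u + |∇u|² I + A) = (φ'' + φ'²) φ'²` at every point. -/
theorem det_reduction_ansatz (b : ℝ) (φ : ℝ → ℝ)
    (hφ : Differentiable ℝ φ) (hφ' : Differentiable ℝ (deriv φ)) (x : Fin 2 → ℝ) :
    (Matrix.of (fun i j : Fin 2 =>
        ehess 2 (uAnsatz b φ) x i j
          + gradSq 2 (uAnsatz b φ) x * (if i = j then 1 else 0))
      + Amat b x).det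
      = (deriv (deriv φ) (x 0) + (deriv φ (x 0)) ^ 2) * (deriv φ (x 0)) ^ 2 := by
  have hf : ∀ i, Differentiable ℝ (![φ, fun t => b / 2 * t ^ 2] i) :=
    Fin.forall_fin_two.2 ⟨hφ, show Differentiable ℝ fun t : ℝ => b / 2 * t ^ 2 by fun_prop⟩
  have hf' : ∀ i, Differentiable ℝ (deriv (![φ, fun t => b / 2 * t ^ 2] i)) :=
    Fin.forall_fin_two.2
      ⟨hφ', show Differentiable ℝ (deriv fun t : ℝ => b / 2 * t ^ 2) by fun_prop⟩
  rw [uAnsatz_eq_sum, Matrix.det_fin_two]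
  simp only [gradSq, egrad_sum_comp_apply fun i => hf i _,
    ehess_sum_comp_apply hf fun i => hf' i _]
  simp [Amat]
  ring
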